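/- arXiv:1210.2679 — 3 statements merged into one kernel-verified Lean document; each statement's English description precedes it below -/
import Mathlib

section
/- Let T, Q be finite sets and A a T×Q-matrix over ℚ. Suppose (u, v) and (u', v') are dual pairs of graded bases of Λ_ℚ, and let M = M(u, u') be the transition matrix defined by u_λ = Σ_μ M_{λμ} u'_μ. Then A^≀(u,v) = M^{⊗T} · A^≀(u',v') · (M^{-1})^{⊗Q}, where for a Par×Par-matrix M, M^{⊗T} denotes the PMap(T)×PMap(T)-matrix with (λ̲,μ̲)-entry Π_{t∈T} M_{λ̲(t), μ̲(t)}. -/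
open scoped BigOperators
open Classical

noncomputable section

/-- The number of maps `f` from the (indexed) parts of `mu` to the parts of `lam` such that for
every part `lam_i` of `lam`, the sum of the parts of `mu` in the fibre `f⁻¹(i)` equals `lam_i`.
This is `|𝓜_{λμ}|` and also the value of the permutation character `h_λ` on the class of cycle
type `μ`. -/
def Mcount (lam mu : Multiset ℕ) : ℕ :=
  Fintype.card {f : Fin (Multiset.card mu) → Fin (Multiset.card lam) //
    ∀ i : Fin (Multiset.card lam),
      (∑ j ∈ Finset.univ.filter (fun j => f j = i), (mu.sort (· ≤ ·)).getD j 0)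
        = (lam.sort (· ≤ ·)).getD i 0}

/-- `z_λ = ∏_i i^{m_i(λ)} m_i(λ)!`. -/
def zMult (lam : Multiset ℕ) : ℕ :=
  ∏ i ∈ lam.toFinset, i ^ lam.count i * (lam.count i).factorial

/-- The cycle type of a permutation of `Fin n`, as the multiset of parts of a partition of `n`
(including the parts equal to `1` corresponding to fixed points). -/
def cycM {n : ℕ} (g : Equiv.Perm (Fin n)) : Multiset ℕ :=
  g.cycleType + Multiset.replicate (n - g.support.card) 1

/-- The value of the irreducible character `s_λ` of the symmetric group on the conjugacy class
of cycle type `nu`, given by the Jacobi–Trudi determinant `s_λ = det(h_{λ_i - i + j})_{i,j}`,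
where `h_α` has value `Mcount α ν` on the class of cycle type `ν`. -/
def sval (lam nu : Multiset ℕ) : ℚ :=
  let L := (lam.sort (· ≤ ·)).reverse
  let l := Multiset.card lam
  ∑ σ : Equiv.Perm (Fin l),
    ((Equiv.Perm.sign σ : ℤ) : ℚ) *
      (if ∀ i : Fin l, (i : ℕ) ≤ L.getD i 0 + (σ i : ℕ) then
        (Mcount ((Multiset.map (fun i : Fin l => L.getD i 0 + (σ i : ℕ) - (i : ℕ))
            (Finset.univ.val : Multiset (Fin l))).filter (fun x => x ≠ 0)) nu : ℚ)
       else 0)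

/-- The irreducible character of `S_n` labelled by the partition `lam`, as a class function on
the symmetric group `S_n = Perm (Fin n)`. -/
def sFun {n : ℕ} (lam : Nat.Partition n) : Equiv.Perm (Fin n) → ℚ :=
  fun g => sval lam.parts (cycM g)

/-- The usual scalar product of class functions on a finite group:
`⟨f, h⟩ = |G|⁻¹ ∑_{g ∈ G} f(g) h(g⁻¹)`. -/
def sp {G : Type*} [Group G] [Fintype G] (f h : G → ℚ) : ℚ :=
  (Fintype.card G : ℚ)⁻¹ * ∑ g : G, f g * h g⁻¹

/-- The class function `p_λ` on `S_w`: `p_λ(g_μ) = z_λ δ_{λμ}`. -/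
def pFun {w : ℕ} (lam : Nat.Partition w) : Equiv.Perm (Fin w) → ℚ :=
  fun g => if cycM g = lam.parts then (zMult lam.parts : ℚ) else 0

/-- The class function `p̃_λ = z_λ⁻¹ p_λ` on `S_w`: the indicator of the class of type `λ`. -/
def ptFun {w : ℕ} (lam : Nat.Partition w) : Equiv.Perm (Fin w) → ℚ :=
  fun g => if cycM g = lam.parts then 1 else 0

/-- The induced class function along an injection `ι : H → G` (underlying a subgroup inclusion):
`Ind φ (g) = |H|⁻¹ ∑_{x ∈ G} ∑_{h ∈ H, ι(h) = x g x⁻¹} φ(h)`. -/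
def IndFun {H G : Type*} [Fintype H] [Fintype G] [Group G] (ι : H → G) (φ : H → ℚ) :
    G → ℚ :=
  fun g => (Fintype.card H : ℚ)⁻¹ * ∑ x : G, ∑ h : H, if ι h = x * g * x⁻¹ then φ h else 0

/-- A bijection `Σ_i Fin (w_i) ≃ Fin w` when `∑_i w_i = w`, realising `Fin w` as the disjoint
union of blocks of sizes `w_i`. -/
def embSigma {η : Type*} [Fintype η] (ws : η → ℕ) {w : ℕ} (h : ∑ i, ws i = w) :
    (Σ i, Fin (ws i)) ≃ Fin w :=
  Fintype.equivOfCardEq (by simp [h])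

/-- The type of all partitions (of arbitrary natural numbers). -/
abbrev PttAll : Type := Σ n : ℕ, Nat.Partition n

/-- Partitions of size at most `w`, with bounded first component (a finite type). -/
abbrev PBP (w : ℕ) : Type := (m : Fin (w + 1)) × Nat.Partition m

/-- `PMap_w(T)`: the (finite) set of maps from `T` to partitions, of total size `w`. -/
abbrev PMapw (T : Type*) [Fintype T] (w : ℕ) : Type _ :=
  {lam : T → PBP w // ∑ t, ((lam t).1 : ℕ) = w}

/-- The scalar product on `Λ_ℚ = ⊕_w CF(S_w)` of two graded elements (the graded components
being orthogonal, this is zero when the degrees differ). -/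
def pairCF {a b : ℕ} (f : Equiv.Perm (Fin a) → ℚ) (g : Equiv.Perm (Fin b) → ℚ) : ℚ :=
  if h : a = b then sp f (fun σ => g ((finCongr h).permCongr σ)) else 0

/-- The product in `Λ_ℚ` of a finite family of graded class functions: the class function on
`S_w` induced from the outer tensor product on the Young subgroup `∏_i S_{w_i}`. -/
def multiProdCF {η : Type*} [Fintype η] (ws : η → ℕ) {w : ℕ} (h : ∑ i, ws i = w)
    (fs : ∀ i, Equiv.Perm (Fin (ws i)) → ℚ) : Equiv.Perm (Fin w) → ℚ :=
  IndFun (fun (g : ∀ i, Equiv.Perm (Fin (ws i))) =>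
      ((embSigma ws h).symm.trans
        ((Equiv.sigmaCongrRight (fun i => (g i : Fin (ws i) ≃ Fin (ws i)))).trans
          (embSigma ws h)) : Equiv.Perm (Fin w)))
    (fun g => ∏ i, fs i (g i))

/-- The `ℚ`-subspace of class functions on `S_n`. -/
def classFunSub (n : ℕ) : Submodule ℚ (Equiv.Perm (Fin n) → ℚ) where
  carrier := {f | ∀ x g, f (x * g * x⁻¹) = f g}
  add_mem' := by
    intro f g hf hg x y
    simp only [Pi.add_apply, hf x y, hg x y]
  zero_mem' := by intro x y; rfl
  smul_mem' := by
    intro c f hf x y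
    simp only [Pi.smul_apply, hf x y]

/-- A graded basis of `Λ_ℚ = ⊕_w CF(S_w)`: a family `(u_λ)` such that for each `n`, the
`u_λ`, `λ ⊢ n`, form a `ℚ`-basis of the space of class functions on `S_n`. -/
def IsGradedBasis (u : ∀ n : ℕ, Nat.Partition n → Equiv.Perm (Fin n) → ℚ) : Prop :=
  ∀ n : ℕ, (∀ lam, u n lam ∈ classFunSub n) ∧ LinearIndependent ℚ (u n) ∧
    Submodule.span ℚ (Set.range (u n)) = classFunSub n

/-- `(u, v)` is a dual pair of graded bases: `⟨u_λ, v_μ⟩ = δ_{λμ}`. -/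
def IsDualPair (u v : ∀ n : ℕ, Nat.Partition n → Equiv.Perm (Fin n) → ℚ) : Prop :=
  ∀ (n : ℕ) (lam mu : Nat.Partition n), sp (u n lam) (v n mu) = if lam = mu then 1 else 0

/-- The `(λ̲, μ̲)`-entry of the matrix `A^{≀}(u, v)`:
`∑_{ν̲} (∏_t ⟨u_{λ̲(t)}, ∏_q p̃_{ν̲(t,q)}⟩) (∏_q ⟨v_{μ̲(q)}, ∏_t p_{ν̲(t,q)}⟩)
  (∏_{t,q} A_{tq}^{l(ν̲(t,q))})`,
the sum running over all maps `ν̲` from `T × Q` to partitions. -/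
def wrGen {T Q : Type*} [Fintype T] [Fintype Q]
    (u v : ∀ n : ℕ, Nat.Partition n → Equiv.Perm (Fin n) → ℚ)
    (A : T → Q → ℚ) (lam : T → PttAll) (mu : Q → PttAll) : ℚ :=
  ∑ᶠ nu : T × Q → PttAll,
    (∏ t : T, pairCF (u (lam t).1 (lam t).2)
        (multiProdCF (fun q => (nu (t, q)).1) rfl (fun q => ptFun (nu (t, q)).2))) *
    (∏ q : Q, pairCF (v (mu q).1 (mu q).2)
        (multiProdCF (fun t => (nu (t, q)).1) rfl (fun t => pFun (nu (t, q)).2))) *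
    (∏ t : T, ∏ q : Q, A t q ^ (Multiset.card (nu (t, q)).2.parts))


section AuxWB

lemma permCongr_conj {α β : Type*} (e : α ≃ β) (x g : Equiv.Perm α) :
    e.permCongr (x * g * x⁻¹) = e.permCongr x * e.permCongr g * (e.permCongr x)⁻¹ := by
  have h : ∀ a b : Equiv.Perm α, e.permCongr (a * b) = e.permCongr a * e.permCongr b := by
    intro a b; ext y; simp [Equiv.permCongr_apply, Equiv.Perm.mul_apply]
  have hi : e.permCongr x⁻¹ = (e.permCongr x)⁻¹ := by
    apply eq_inv_of_mul_eq_one_right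
    rw [← h]; simp
    ext y; simp [Equiv.permCongr_apply]
  rw [h, h, hi]

lemma sp_comm {G : Type*} [Group G] [Fintype G] (f h : G → ℚ) : sp f h = sp h f := by
  unfold sp
  congr 1
  conv_lhs => rw [← Equiv.sum_comp (Equiv.inv G) (fun g => f g * h g⁻¹)]
  apply Finset.sum_congr rfl
  intro g _
  simp [mul_comm]

lemma sp_sum_left {G : Type*} [Group G] [Fintype G] {ι : Type*} [Fintype ι]
    (f : ι → G → ℚ) (h : G → ℚ) :
    sp (fun g => ∑ i, f i g) h = ∑ i, sp (f i) h := by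
  unfold sp
  simp_rw [Finset.sum_mul, Finset.mul_sum]
  rw [Finset.sum_comm]

lemma sp_zero_right {G : Type*} [Group G] [Fintype G] (f : G → ℚ) : sp f 0 = 0 := by
  simp [sp]

lemma sp_add_right {G : Type*} [Group G] [Fintype G] (f h1 h2 : G → ℚ) :
    sp f (h1 + h2) = sp f h1 + sp f h2 := by
  simp [sp, mul_add, Finset.sum_add_distrib]

lemma sp_smul_right {G : Type*} [Group G] [Fintype G] (c : ℚ) (f h : G → ℚ) :
    sp f (c • h) = c * sp f h := by
  simp only [sp, Pi.smul_apply, smul_eq_mul, Finset.mul_sum]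
  apply Finset.sum_congr rfl
  intro g _
  ring

lemma indFun_conj {H G : Type*} [Fintype H] [Fintype G] [Group G] (ι : H → G) (φ : H → ℚ)
    (x g : G) : IndFun ι φ (x * g * x⁻¹) = IndFun ι φ g := by
  unfold IndFun
  congr 1
  have key : ∀ y : G, y * (x * g * x⁻¹) * y⁻¹ = (y * x) * g * (y * x)⁻¹ := by
    intro y; group
  simp_rw [key]
  exact Equiv.sum_comp (Equiv.mulRight x) (fun y => ∑ h : H, if ι h = y * g * y⁻¹ then φ h else 0)

lemma multiProdCF_mem {η : Type*} [Fintype η] (ws : η → ℕ) {w : ℕ} (h : ∑ i, ws i = w)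
    (fs : ∀ i, Equiv.Perm (Fin (ws i)) → ℚ) : multiProdCF ws h fs ∈ classFunSub w := by
  intro x g
  exact indFun_conj _ _ x g

lemma pairCF_deg {a b : ℕ} {f : Equiv.Perm (Fin a) → ℚ} {g : Equiv.Perm (Fin b) → ℚ}
    (h : pairCF f g ≠ 0) : a = b := by
  by_contra hab
  exact h (dif_neg hab)

lemma sigma_cast_eq (x : PttAll) (n : ℕ) (h : x.1 = n) : (⟨n, h ▸ x.2⟩ : PttAll) = x := by
  cases x; cases h; rfl

section Expand

variable (u v u' v' : ∀ n : ℕ, Nat.Partition n → Equiv.Perm (Fin n) → ℚ)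
variable (M Minv : PttAll → PttAll → ℚ)

lemma u'_expand
    (hM : ∀ (n : ℕ) (lam : Nat.Partition n) (σ : Equiv.Perm (Fin n)),
      u n lam σ = ∑ mu : Nat.Partition n, M ⟨n, lam⟩ ⟨n, mu⟩ * u' n mu σ)
    (hMr : ∀ (n : ℕ) (lam mu : Nat.Partition n),
      (∑ nu : Nat.Partition n, Minv ⟨n, lam⟩ ⟨n, nu⟩ * M ⟨n, nu⟩ ⟨n, mu⟩)
        = if lam = mu then 1 else 0)
    (n : ℕ) (γ : Nat.Partition n) (σ : Equiv.Perm (Fin n)) :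
    u' n γ σ = ∑ δ : Nat.Partition n, Minv ⟨n, γ⟩ ⟨n, δ⟩ * u n δ σ := by
  symm
  calc ∑ δ : Nat.Partition n, Minv ⟨n, γ⟩ ⟨n, δ⟩ * u n δ σ
      = ∑ δ : Nat.Partition n, ∑ ε : Nat.Partition n,
          Minv ⟨n, γ⟩ ⟨n, δ⟩ * (M ⟨n, δ⟩ ⟨n, ε⟩ * u' n ε σ) := by
        apply Finset.sum_congr rfl; intro δ _
        rw [hM n δ σ, Finset.mul_sum]
    _ = ∑ ε : Nat.Partition n,
          (∑ δ : Nat.Partition n, Minv ⟨n, γ⟩ ⟨n, δ⟩ * M ⟨n, δ⟩ ⟨n, ε⟩) * u' n ε σ := by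
        rw [Finset.sum_comm]
        apply Finset.sum_congr rfl; intro ε _
        rw [Finset.sum_mul]
        apply Finset.sum_congr rfl; intro δ _
        ring
    _ = ∑ ε : Nat.Partition n, (if γ = ε then (1:ℚ) else 0) * u' n ε σ := by
        apply Finset.sum_congr rfl; intro ε _
        rw [hMr n γ ε]
    _ = u' n γ σ := by
        simp [ite_mul]

lemma spB
    (hu' : IsGradedBasis u')
    (hd : IsDualPair u v) (hd' : IsDualPair u' v')
    (hM : ∀ (n : ℕ) (lam : Nat.Partition n) (σ : Equiv.Perm (Fin n)),
      u n lam σ = ∑ mu : Nat.Partition n, M ⟨n, lam⟩ ⟨n, mu⟩ * u' n mu σ)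
    (hMr : ∀ (n : ℕ) (lam mu : Nat.Partition n),
      (∑ nu : Nat.Partition n, Minv ⟨n, lam⟩ ⟨n, nu⟩ * M ⟨n, nu⟩ ⟨n, mu⟩)
        = if lam = mu then 1 else 0)
    (n : ℕ) (μ2 : Nat.Partition n) (Y : Equiv.Perm (Fin n) → ℚ) (hY : Y ∈ classFunSub n) :
    sp (v n μ2) Y = ∑ b : Nat.Partition n, Minv ⟨n, b⟩ ⟨n, μ2⟩ * sp (v' n b) Y := by
  have hspan : Y ∈ Submodule.span ℚ (Set.range (u' n)) := by
    rw [(hu' n).2.2]; exact hY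
  refine Submodule.span_induction
    (p := fun Y _ => sp (v n μ2) Y = ∑ b : Nat.Partition n, Minv ⟨n, b⟩ ⟨n, μ2⟩ * sp (v' n b) Y)
    ?_ ?_ ?_ ?_ hspan
  · rintro _ ⟨γ, rfl⟩
    have hexp : u' n γ = fun σ => ∑ δ : Nat.Partition n, Minv ⟨n, γ⟩ ⟨n, δ⟩ * u n δ σ :=
      funext (u'_expand u u' M Minv hM hMr n γ)
    have hL : sp (v n μ2) (u' n γ) = Minv ⟨n, γ⟩ ⟨n, μ2⟩ := by
      rw [sp_comm, hexp]
      have : (fun σ => ∑ δ : Nat.Partition n, Minv ⟨n, γ⟩ ⟨n, δ⟩ * u n δ σ)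
          = fun σ => ∑ δ : Nat.Partition n, (fun δ σ => Minv ⟨n, γ⟩ ⟨n, δ⟩ * u n δ σ) δ σ := rfl
      rw [this, sp_sum_left]
      have : ∀ δ : Nat.Partition n,
          sp (fun σ => Minv ⟨n, γ⟩ ⟨n, δ⟩ * u n δ σ) (v n μ2)
            = Minv ⟨n, γ⟩ ⟨n, δ⟩ * (if δ = μ2 then (1:ℚ) else 0) := by
        intro δ
        have h1 : (fun σ => Minv ⟨n, γ⟩ ⟨n, δ⟩ * u n δ σ) = (Minv ⟨n, γ⟩ ⟨n, δ⟩ : ℚ) • u n δ := by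
          funext σ; simp
        rw [h1, sp_comm, sp_smul_right, sp_comm, hd n δ μ2]
      rw [Finset.sum_congr rfl (fun δ _ => this δ)]
      simp
    have hR : ∀ b : Nat.Partition n, sp (v' n b) (u' n γ) = if γ = b then (1:ℚ) else 0 := by
      intro b
      rw [sp_comm, hd' n γ b]
    rw [hL, Finset.sum_congr rfl (fun b _ => by rw [hR b])]
    simp
  · simp only [sp_zero_right, mul_zero, Finset.sum_const_zero]
  · intro x y _ _ hx hy
    rw [sp_add_right, hx, hy, ← Finset.sum_add_distrib]
    apply Finset.sum_congr rfl; intro b _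
    rw [sp_add_right]; ring
  · intro c x _ hx
    rw [sp_smul_right, hx, Finset.mul_sum]
    apply Finset.sum_congr rfl; intro b _
    rw [sp_smul_right]; ring

lemma pairA
    (hM : ∀ (n : ℕ) (lam : Nat.Partition n) (σ : Equiv.Perm (Fin n)),
      u n lam σ = ∑ mu : Nat.Partition n, M ⟨n, lam⟩ ⟨n, mu⟩ * u' n mu σ)
    (l : PttAll) {n : ℕ} (G : Equiv.Perm (Fin n) → ℚ) :
    pairCF (u l.1 l.2) G = ∑ a : Nat.Partition l.1, M l ⟨l.1, a⟩ * pairCF (u' l.1 a) G := by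
  unfold pairCF
  by_cases h : l.1 = n
  · simp only [dif_pos h]
    have hexp : u l.1 l.2 = fun σ => ∑ a : Nat.Partition l.1, M l ⟨l.1, a⟩ * u' l.1 a σ := by
      funext σ
      have := hM l.1 l.2 σ
      simpa using this
    rw [hexp]
    have : (fun σ => ∑ a : Nat.Partition l.1, M l ⟨l.1, a⟩ * u' l.1 a σ)
        = fun σ => ∑ a : Nat.Partition l.1, (fun a σ => M l ⟨l.1, a⟩ * u' l.1 a σ) a σ := rfl
    rw [this, sp_sum_left]
    apply Finset.sum_congr rfl; intro a _
    have h1 : (fun σ => M l ⟨l.1, a⟩ * u' l.1 a σ) = (M l ⟨l.1, a⟩ : ℚ) • u' l.1 a := by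
      funext σ; simp
    rw [h1, sp_comm, sp_smul_right, sp_comm]
  · simp only [dif_neg h, mul_zero, Finset.sum_const_zero]

lemma pairB
    (hu' : IsGradedBasis u')
    (hd : IsDualPair u v) (hd' : IsDualPair u' v')
    (hM : ∀ (n : ℕ) (lam : Nat.Partition n) (σ : Equiv.Perm (Fin n)),
      u n lam σ = ∑ mu : Nat.Partition n, M ⟨n, lam⟩ ⟨n, mu⟩ * u' n mu σ)
    (hMr : ∀ (n : ℕ) (lam mu : Nat.Partition n),
      (∑ nu : Nat.Partition n, Minv ⟨n, lam⟩ ⟨n, nu⟩ * M ⟨n, nu⟩ ⟨n, mu⟩)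
        = if lam = mu then 1 else 0)
    (m : PttAll) {n : ℕ} (G : Equiv.Perm (Fin n) → ℚ) (hG : G ∈ classFunSub n) :
    pairCF (v m.1 m.2) G = ∑ b : Nat.Partition m.1, Minv ⟨m.1, b⟩ m * pairCF (v' m.1 b) G := by
  unfold pairCF
  by_cases h : m.1 = n
  · simp only [dif_pos h]
    have hG' : (fun σ => G ((finCongr h).permCongr σ)) ∈ classFunSub m.1 := by
      intro x g
      simp only
      rw [permCongr_conj]
      exact hG _ _
    have := spB u v u' v' M Minv hu' hd hd' hM hMr m.1 m.2
      (fun σ => G ((finCongr h).permCongr σ)) hG'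
    simpa using this
  · simp only [dif_neg h, mul_zero, Finset.sum_const_zero]

end Expand

end AuxWB


def PhiT {T Q : Type*} [Fintype T] [Fintype Q] (nu : T × Q → PttAll) (t : T) :
    Equiv.Perm (Fin (∑ q, (nu (t, q)).1)) → ℚ :=
  multiProdCF (fun q => (nu (t, q)).1) rfl (fun q => ptFun (nu (t, q)).2)

def PsiQ {T Q : Type*} [Fintype T] [Fintype Q] (nu : T × Q → PttAll) (q : Q) :
    Equiv.Perm (Fin (∑ t, (nu (t, q)).1)) → ℚ :=
  multiProdCF (fun t => (nu (t, q)).1) rfl (fun t => pFun (nu (t, q)).2)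

def PaP {T Q : Type*} [Fintype T] [Fintype Q] (A : T → Q → ℚ) (nu : T × Q → PttAll) : ℚ :=
  ∏ t : T, ∏ q : Q, A t q ^ (Multiset.card (nu (t, q)).2.parts)

/-- **Lemma 3.8.** Let `(u, v)` and `(u', v')` be dual pairs of graded bases of `Λ_ℚ`, and let
`M = M(u, u')` be the transition matrix (with two-sided inverse `M⁻¹ = Minv`). Then
`A^{≀}(u, v) = M^{⊗T} · A^{≀}(u', v') · (M⁻¹)^{⊗Q}`. -/
theorem wr_base_change {T Q : Type*} [Fintype T] [Fintype Q]
    (u v u' v' : ∀ n : ℕ, Nat.Partition n → Equiv.Perm (Fin n) → ℚ)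
    (hu : IsGradedBasis u) (hv : IsGradedBasis v)
    (hu' : IsGradedBasis u') (hv' : IsGradedBasis v')
    (hd : IsDualPair u v) (hd' : IsDualPair u' v')
    (A : T → Q → ℚ)
    (M Minv : PttAll → PttAll → ℚ)
    (hM0 : ∀ a b : PttAll, a.1 ≠ b.1 → M a b = 0)
    (hMinv0 : ∀ a b : PttAll, a.1 ≠ b.1 → Minv a b = 0)
    (hM : ∀ (n : ℕ) (lam : Nat.Partition n) (σ : Equiv.Perm (Fin n)),
      u n lam σ = ∑ mu : Nat.Partition n, M ⟨n, lam⟩ ⟨n, mu⟩ * u' n mu σ)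
    (hMl : ∀ (n : ℕ) (lam mu : Nat.Partition n),
      (∑ nu : Nat.Partition n, M ⟨n, lam⟩ ⟨n, nu⟩ * Minv ⟨n, nu⟩ ⟨n, mu⟩)
        = if lam = mu then 1 else 0)
    (hMr : ∀ (n : ℕ) (lam mu : Nat.Partition n),
      (∑ nu : Nat.Partition n, Minv ⟨n, lam⟩ ⟨n, nu⟩ * M ⟨n, nu⟩ ⟨n, mu⟩)
        = if lam = mu then 1 else 0)
    (lam : T → PttAll) (mu : Q → PttAll) :
    wrGen u v A lam mu
      = ∑ᶠ ab : (T → PttAll) × (Q → PttAll),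
          (∏ t : T, M (lam t) (ab.1 t)) * wrGen u' v' A ab.1 ab.2 *
            (∏ q : Q, Minv (ab.2 q) (mu q)) := by
  classical
  have hbd : ∀ n : ℕ, ({a : PttAll | a.1 ≤ n}).Finite := by
    intro n
    apply Set.Finite.subset (Set.finite_range (fun x : PBP n => (⟨(x.1 : ℕ), x.2⟩ : PttAll)))
    rintro ⟨m, p⟩ hm
    exact ⟨⟨⟨m, Nat.lt_succ_of_le hm⟩, p⟩, rfl⟩
  have hSfin : ({ν : T × Q → PttAll | ∀ p : T × Q, (ν p).1 ≤ (lam p.1).1}).Finite := by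
    have heq : {ν : T × Q → PttAll | ∀ p : T × Q, (ν p).1 ≤ (lam p.1).1}
        = Set.univ.pi (fun p : T × Q => {a : PttAll | a.1 ≤ (lam p.1).1}) := by
      ext ν
      simp [Set.mem_pi]
    rw [heq]
    exact Set.Finite.pi fun p => hbd _
  set Sν : Finset (T × Q → PttAll) := hSfin.toFinset with hSνdef
  have hSνmem : ∀ ν : T × Q → PttAll, (∀ p : T × Q, (ν p).1 ≤ (lam p.1).1) → ν ∈ Sν := by
    intro ν h
    rw [hSνdef, Set.Finite.mem_toFinset]
    exact h
  let pack : ((∀ t : T, Nat.Partition (lam t).1) × (∀ q : Q, Nat.Partition (mu q).1)) →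
      (T → PttAll) × (Q → PttAll) :=
    fun i => (fun t => ⟨(lam t).1, i.1 t⟩, fun q => ⟨(mu q).1, i.2 q⟩)
  have hpackinj : Function.Injective pack := by
    intro i j hij
    have h1 : ∀ t, (⟨(lam t).1, i.1 t⟩ : PttAll) = ⟨(lam t).1, j.1 t⟩ :=
      fun t => congrFun (congrArg Prod.fst hij) t
    have h2 : ∀ q, (⟨(mu q).1, i.2 q⟩ : PttAll) = ⟨(mu q).1, j.2 q⟩ :=
      fun q => congrFun (congrArg Prod.snd hij) q
    exact Prod.ext (funext fun t => eq_of_heq (Sigma.mk.inj_iff.mp (h1 t)).2)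
      (funext fun q => eq_of_heq (Sigma.mk.inj_iff.mp (h2 q)).2)
  have hL : wrGen u v A lam mu = ∑ ν ∈ Sν,
      (∏ t : T, pairCF (u (lam t).1 (lam t).2) (PhiT ν t)) *
      (∏ q : Q, pairCF (v (mu q).1 (mu q).2) (PsiQ ν q)) * PaP A ν := by
    have h0 : wrGen u v A lam mu = ∑ᶠ ν : T × Q → PttAll,
        (∏ t : T, pairCF (u (lam t).1 (lam t).2) (PhiT ν t)) *
        (∏ q : Q, pairCF (v (mu q).1 (mu q).2) (PsiQ ν q)) * PaP A ν := rfl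
    rw [h0]
    apply finsum_eq_finset_sum_of_support_subset
    intro ν hν
    simp only [Function.mem_support] at hν
    refine Finset.mem_coe.mpr (hSνmem ν ?_)
    rintro ⟨t, q⟩
    have h3 := mul_ne_zero_iff.mp hν
    have h12 := mul_ne_zero_iff.mp h3.1
    have ht := Finset.prod_ne_zero_iff.mp h12.1 t (Finset.mem_univ t)
    have hdeg : (lam t).1 = ∑ q' : Q, ((ν (t, q')).1 : ℕ) := pairCF_deg ht
    show ((ν (t, q)).1 : ℕ) ≤ (lam t).1
    rw [hdeg]
    exact Finset.single_le_sum (f := fun q' : Q => ((ν (t, q')).1 : ℕ))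
      (fun q' _ => Nat.zero_le _) (Finset.mem_univ q)
  have hInner : ∀ i : (∀ t : T, Nat.Partition (lam t).1) × (∀ q : Q, Nat.Partition (mu q).1),
      wrGen u' v' A (pack i).1 (pack i).2 = ∑ ν ∈ Sν,
      (∏ t : T, pairCF (u' (lam t).1 (i.1 t)) (PhiT ν t)) *
      (∏ q : Q, pairCF (v' (mu q).1 (i.2 q)) (PsiQ ν q)) * PaP A ν := by
    intro i
    have h0 : wrGen u' v' A (pack i).1 (pack i).2 = ∑ᶠ ν : T × Q → PttAll,
        (∏ t : T, pairCF (u' (lam t).1 (i.1 t)) (PhiT ν t)) *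
        (∏ q : Q, pairCF (v' (mu q).1 (i.2 q)) (PsiQ ν q)) * PaP A ν := rfl
    rw [h0]
    apply finsum_eq_finset_sum_of_support_subset
    intro ν hν
    simp only [Function.mem_support] at hν
    refine Finset.mem_coe.mpr (hSνmem ν ?_)
    rintro ⟨t, q⟩
    have h3 := mul_ne_zero_iff.mp hν
    have h12 := mul_ne_zero_iff.mp h3.1
    have ht := Finset.prod_ne_zero_iff.mp h12.1 t (Finset.mem_univ t)
    have hdeg : (lam t).1 = ∑ q' : Q, ((ν (t, q')).1 : ℕ) := pairCF_deg ht
    show ((ν (t, q)).1 : ℕ) ≤ (lam t).1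
    rw [hdeg]
    exact Finset.single_le_sum (f := fun q' : Q => ((ν (t, q')).1 : ℕ))
      (fun q' _ => Nat.zero_le _) (Finset.mem_univ q)
  have hR : (∑ᶠ ab : (T → PttAll) × (Q → PttAll),
        (∏ t : T, M (lam t) (ab.1 t)) * wrGen u' v' A ab.1 ab.2 *
          (∏ q : Q, Minv (ab.2 q) (mu q)))
      = ∑ i : (∀ t : T, Nat.Partition (lam t).1) × (∀ q : Q, Nat.Partition (mu q).1),
          (∏ t : T, M (lam t) ⟨(lam t).1, i.1 t⟩) * wrGen u' v' A (pack i).1 (pack i).2 *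
            (∏ q : Q, Minv ⟨(mu q).1, i.2 q⟩ (mu q)) := by
    rw [finsum_eq_finset_sum_of_support_subset _ (s := Finset.univ.image pack) ?_]
    · rw [Finset.sum_image (fun i _ j _ h => hpackinj h)]
    · intro ab hab
      simp only [Function.mem_support] at hab
      have h3 := mul_ne_zero_iff.mp hab
      have h12 := mul_ne_zero_iff.mp h3.1
      have hMt : ∀ t, (ab.1 t).1 = (lam t).1 := by
        intro t
        by_contra hne
        exact Finset.prod_ne_zero_iff.mp h12.1 t (Finset.mem_univ t)
          (hM0 (lam t) (ab.1 t) fun h => hne h.symm)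
      have hMq : ∀ q, (ab.2 q).1 = (mu q).1 := by
        intro q
        by_contra hne
        exact Finset.prod_ne_zero_iff.mp h3.2 q (Finset.mem_univ q)
          (hMinv0 (ab.2 q) (mu q) hne)
      refine Finset.mem_coe.mpr (Finset.mem_image.mpr ⟨⟨fun t => (hMt t) ▸ (ab.1 t).2,
        fun q => (hMq q) ▸ (ab.2 q).2⟩, Finset.mem_univ _, ?_⟩)
      refine Prod.ext (funext fun t => ?_) (funext fun q => ?_)
      · exact sigma_cast_eq (ab.1 t) (lam t).1 (hMt t)
      · exact sigma_cast_eq (ab.2 q) (mu q).1 (hMq q)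
  rw [hL, hR]
  have hstep : ∀ i : (∀ t : T, Nat.Partition (lam t).1) × (∀ q : Q, Nat.Partition (mu q).1),
      (∏ t : T, M (lam t) ⟨(lam t).1, i.1 t⟩) * wrGen u' v' A (pack i).1 (pack i).2 *
        (∏ q : Q, Minv ⟨(mu q).1, i.2 q⟩ (mu q))
      = ∑ ν ∈ Sν, (∏ t : T, M (lam t) ⟨(lam t).1, i.1 t⟩) *
          ((∏ t : T, pairCF (u' (lam t).1 (i.1 t)) (PhiT ν t)) *
           (∏ q : Q, pairCF (v' (mu q).1 (i.2 q)) (PsiQ ν q)) * PaP A ν) *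
          (∏ q : Q, Minv ⟨(mu q).1, i.2 q⟩ (mu q)) := by
    intro i
    rw [hInner i, Finset.mul_sum, Finset.sum_mul]
  simp only [hstep]
  rw [Finset.sum_comm]
  apply Finset.sum_congr rfl
  intro ν _
  have e1a : ∀ t ∈ (Finset.univ : Finset T),
      pairCF (u (lam t).1 (lam t).2) (PhiT ν t)
        = ∑ a : Nat.Partition (lam t).1,
            M (lam t) ⟨(lam t).1, a⟩ * pairCF (u' (lam t).1 a) (PhiT ν t) :=
    fun t _ => pairA u u' M hM (lam t) (PhiT ν t)
  have e2a : ∀ q ∈ (Finset.univ : Finset Q),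
      pairCF (v (mu q).1 (mu q).2) (PsiQ ν q)
        = ∑ b : Nat.Partition (mu q).1,
            Minv ⟨(mu q).1, b⟩ (mu q) * pairCF (v' (mu q).1 b) (PsiQ ν q) :=
    fun q _ => pairB u v u' v' M Minv hu' hd hd' hM hMr (mu q) (PsiQ ν q)
      (multiProdCF_mem _ _ _)
  rw [Finset.prod_congr rfl e1a, Finset.prod_congr rfl e2a,
    Finset.prod_univ_sum, Finset.prod_univ_sum, Fintype.piFinset_univ, Fintype.piFinset_univ]
  rw [Finset.sum_mul_sum]
  simp only [Finset.sum_mul]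
  rw [Fintype.sum_prod_type]
  apply Finset.sum_congr rfl
  intro a _
  apply Finset.sum_congr rfl
  intro b _
  rw [Finset.prod_mul_distrib, Finset.prod_mul_distrib]
  ring

end
end

section
/- Let R be an integral domain with field of fractions K, T a finite set with a set partition T = ⊔_i T_i, and A a T×T-matrix over K that splits over R with respect to this set partition. Suppose A is lower-triangular with respect to some total order on T and A_{tt} ≠ 0 for all t ∈ T. Define the T×T-matrix Ã by Ã_{tq} = A_{tq} if t, q lie in the same T_i, and Ã_{tq} = 0 otherwise. Then A is row equivalent to Ã over R, i.e., Ã = UA for some T×T-matrix U invertible over R. -/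
open scoped BigOperators
open Classical

noncomputable section

/-- **Lemma 4.5.** Let `R` be an integral domain with field of fractions `K`, and let `A` be a
`T × T`-matrix over `K` that splits over `R` with respect to a set partition of `T` (given by
the fibres of `c : T → I`). If `A` is lower triangular with nonzero diagonal with respect to a
total order on `T`, then `A` is row equivalent over `R` to the matrix `Ã` obtained from `A`
by replacing by `0` all entries whose row and column indices lie in different blocks. -/
theorem split_triangular_row_equiv {R : Type*} [CommRing R] [IsDomain R]
    (K : Type*) [Field K] [Algebra R K] [IsFractionRing R K]
    {T : Type*} [Fintype T] [LinearOrder T] {I : Type*} (c : T → I)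
    (A : Matrix T T K)
    (hsplit : ∀ i : I, ∀ v ∈ Submodule.span R (Set.range (fun t : T => A t)),
      (fun q : T => if c q = i then v q else 0)
        ∈ Submodule.span R (Set.range (fun t : T => A t)))
    (htri : ∀ t q : T, t < q → A t q = 0)
    (hdiag : ∀ t : T, A t t ≠ 0) :
    ∃ U : Matrix T T R, IsUnit U ∧
      (Matrix.of fun t q : T => if c t = c q then A t q else 0)
        = U.map (algebraMap R K) * A := by
  have hmem : ∀ t : T, ∃ u : T → R,
      (∑ q, u q • A q) = fun q : T => if c q = c t then A t q else 0 := by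
    intro t
    have h := hsplit (c t) (A t) (Submodule.subset_span ⟨t, rfl⟩)
    exact (Submodule.mem_span_range_iff_exists_fun R).mp h
  choose u hu using hmem
  set U : Matrix T T R := Matrix.of u with hU
  set Atl : Matrix T T K := Matrix.of fun t q : T => if c t = c q then A t q else 0 with hAtl
  have hmul : Atl = U.map (algebraMap R K) * A := by
    ext t q'
    have key := congrFun (hu t) q'
    simp only [Finset.sum_apply, Pi.smul_apply] at key
    simp only [Algebra.smul_def] at key
    simp only [hAtl, Matrix.of_apply, Matrix.mul_apply, Matrix.map_apply, hU]
    rw [show (∑ x : T, (algebraMap R K) (u t x) * A x q') = if c q' = c t then A t q' else 0 from key]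
    rcases eq_or_ne (c t) (c q') with h | h
    · rw [if_pos h, if_pos h.symm]
    · rw [if_neg h, if_neg (Ne.symm h)]
  refine ⟨U, ?_, hmul⟩
  -- determinants
  have hAtltri : Atl.BlockTriangular OrderDual.toDual := by
    intro t q h
    have h' : t < q := by simpa using h
    simp [hAtl, htri t q h']
  have hAtri : A.BlockTriangular OrderDual.toDual := by
    intro t q h
    exact htri t q (by simpa using h)
  have hdetA : A.det = ∏ t : T, A t t := Matrix.det_of_lowerTriangular A hAtri
  have hdetAtl : Atl.det = ∏ t : T, A t t := by
    rw [Matrix.det_of_lowerTriangular Atl hAtltri]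
    exact Finset.prod_congr rfl fun t _ => by simp [hAtl]
  have hdetA0 : A.det ≠ 0 := by
    rw [hdetA]
    exact Finset.prod_ne_zero_iff.mpr fun t _ => hdiag t
  have hdet1 : (algebraMap R K) U.det = 1 := by
    have := congrArg Matrix.det hmul
    rw [Matrix.det_mul, hdetAtl, ← hdetA, show U.map ⇑(algebraMap R K) = (algebraMap R K).mapMatrix U from rfl, ← RingHom.map_det] at this
    have h1 : (algebraMap R K) U.det * A.det = 1 * A.det := by rw [one_mul]; exact this.symm
    exact mul_right_cancel₀ hdetA0 h1
  have : U.det = 1 := by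
    have hinj : Function.Injective (algebraMap R K) := IsFractionRing.injective R K
    apply hinj
    rw [hdet1, map_one]
  rw [Matrix.isUnit_iff_isUnit_det, this]
  exact isUnit_one

end
end

section
/- Let R be a discrete valuation ring with field of fractions K and valuation v: K → ℤ ∪ {∞}. Let I be a finite set, let s, t, u, P, Q be invertible I×I-matrices over K with s, t, u diagonal, and set ρ_i = v(s_i) + v(t_i) + v(u_i) for i ∈ I. Suppose there exist tuples of rational numbers (α_i)_{i∈I} and (β_i)_{i∈I} such that for all i, j ∈ I: (i) v(t_i) = α_i − β_i; (ii) v(P_{ij} − δ_{ij}) > α_i − α_j; (iii) v(Q_{ij} − δ_{ij}) > β_i − β_j; (iv) if ρ_i ≥ ρ_j then α_i − α_j ≥ v(s_j) − v(s_i); (v) if ρ_i ≥ ρ_j then β_j − β_i ≥ v(u_j) − v(u_i). Then the matrix sPtQu is equivalent over R to the diagonal matrix stu. -/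
open scoped BigOperators
open Classical

noncomputable section

namespace DVRAux

structure Val (K : Type*) [Field K] where
  w : K → WithTop ℚ
  wmul : ∀ x y, w (x * y) = w x + w y
  wmin : ∀ x y, min (w x) (w y) ≤ w (x + y)
  wtop : ∀ x, w x = ⊤ ↔ x = 0

namespace Val
variable {K : Type*} [Field K] (V : Val K)

lemma wone : V.w 1 = 0 := by
  have h := V.wmul 1 1
  rw [mul_one] at h
  have h1 : V.w 1 ≠ ⊤ := by simp [V.wtop]
  lift V.w 1 to ℚ using h1 with q hq
  rw [← WithTop.coe_add, WithTop.coe_inj] at h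
  norm_num at h ⊢
  linarith

lemma wzero : V.w 0 = ⊤ := (V.wtop 0).2 rfl

lemma wneg (x : K) : V.w (-x) = V.w x := by
  have hm : V.w (-1) = 0 := by
    have h := V.wmul (-1) (-1)
    rw [neg_one_mul, neg_neg, V.wone] at h
    have h1 : V.w (-1) ≠ ⊤ := by simp [V.wtop]
    lift V.w (-1) to ℚ using h1 with q hq
    rw [← WithTop.coe_add, ← WithTop.coe_zero, WithTop.coe_inj] at h
    rw [← WithTop.coe_zero, WithTop.coe_inj]
    linarith
  calc V.w (-x) = V.w ((-1) * x) := by rw [neg_one_mul]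
  _ = V.w x := by rw [V.wmul, hm, zero_add]

lemma wsub (x y : K) : min (V.w x) (V.w y) ≤ V.w (x - y) := by
  rw [sub_eq_add_neg, ← V.wneg y]
  exact V.wmin x (-y)

lemma winv {x : K} {q : ℚ} (h : V.w x = (q : WithTop ℚ)) :
    V.w x⁻¹ = ((-q : ℚ) : WithTop ℚ) := by
  have hx : x ≠ 0 := by
    intro h0; rw [h0, V.wzero] at h; exact (WithTop.top_ne_coe) h
  have h1 := V.wmul x x⁻¹
  rw [mul_inv_cancel₀ hx, V.wone, h] at h1
  have h2 : V.w x⁻¹ ≠ ⊤ := by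
    intro ht; rw [ht] at h1; simp at h1
  lift V.w x⁻¹ to ℚ using h2 with r hr
  rw [← WithTop.coe_add, ← WithTop.coe_zero, WithTop.coe_inj] at h1
  rw [WithTop.coe_inj]
  linarith

lemma wne_zero {x : K} {q : ℚ} (h : V.w x = (q : WithTop ℚ)) : x ≠ 0 := by
  intro h0; rw [h0, V.wzero] at h; exact (WithTop.top_ne_coe) h

/-- ultrametric: adding something of bigger valuation doesn't change valuation -/
lemma w_add_eq {x y : K} (h : V.w x < V.w y) : V.w (x + y) = V.w x := by
  refine le_antisymm ?_ ?_
  · by_contra hc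
    push_neg at hc
    have : V.w x < min (V.w (x + y)) (V.w (-y)) := by
      rw [V.wneg]; exact lt_min hc h
    have h2 := V.wmin (x + y) (-y)
    rw [add_neg_cancel_right] at h2
    exact absurd (lt_of_lt_of_le this h2) (lt_irrefl _)
  · exact le_trans (le_min (le_refl _) (le_of_lt h)) (V.wmin x y)

lemma lt_add_lt {p q : ℚ} {a b : WithTop ℚ} (ha : (p : WithTop ℚ) < a)
    (hb : (q : WithTop ℚ) < b) : ((p + q : ℚ) : WithTop ℚ) < a + b := by
  induction a using WithTop.recTopCoe with
  | top => rw [top_add]; exact WithTop.coe_lt_top _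
  | coe a =>
    induction b using WithTop.recTopCoe with
    | top => rw [add_top]; exact WithTop.coe_lt_top _
    | coe b =>
      rw [← WithTop.coe_add, WithTop.coe_lt_coe] at *
      exact add_lt_add ha hb

lemma le_add_lt {p q : ℚ} {a b : WithTop ℚ} (ha : (p : WithTop ℚ) ≤ a)
    (hb : (q : WithTop ℚ) < b) : ((p + q : ℚ) : WithTop ℚ) < a + b := by
  induction a using WithTop.recTopCoe with
  | top => rw [top_add]; exact WithTop.coe_lt_top _
  | coe a =>
    induction b using WithTop.recTopCoe with
    | top => rw [add_top]; exact WithTop.coe_lt_top _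
    | coe b =>
      rw [← WithTop.coe_add, WithTop.coe_lt_coe] at *
      rw [WithTop.coe_le_coe] at ha
      exact add_lt_add_of_le_of_lt ha hb

lemma lt_w_sum {ι : Type*} (s : Finset ι) (f : ι → K) {q : ℚ}
    (h : ∀ k ∈ s, (q : WithTop ℚ) < V.w (f k)) :
    (q : WithTop ℚ) < V.w (∑ k ∈ s, f k) := by
  induction s using Finset.induction with
  | empty => simp [V.wzero]
  | @insert a s' hni ih =>
    rw [Finset.sum_insert hni]
    refine lt_of_lt_of_le ?_ (V.wmin _ _)
    exact lt_min (h a (Finset.mem_insert_self a s'))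
      (ih fun k hk => h k (Finset.mem_insert_of_mem hk))

lemma lt_w_sub {q : ℚ} {x y : K} (hx : (q : WithTop ℚ) < V.w x)
    (hy : (q : WithTop ℚ) < V.w y) : (q : WithTop ℚ) < V.w (x - y) :=
  lt_of_lt_of_le (lt_min hx hy) (V.wsub x y)

lemma lt_add_le {q p : ℚ} {a b : WithTop ℚ} (ha : (p : WithTop ℚ) < a)
    (hb : (q : WithTop ℚ) ≤ b) : ((p + q : ℚ) : WithTop ℚ) < a + b := by
  induction a using WithTop.recTopCoe with
  | top => rw [top_add]; exact WithTop.coe_lt_top _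
  | coe a =>
    induction b using WithTop.recTopCoe with
    | top => rw [add_top]; exact WithTop.coe_lt_top _
    | coe b =>
      rw [← WithTop.coe_add, WithTop.coe_lt_coe] at *
      rw [WithTop.coe_le_coe] at hb
      exact add_lt_add_of_lt_of_le ha hb

lemma lt_w_add {q : ℚ} {x y : K} (hx : (q : WithTop ℚ) < V.w x)
    (hy : (q : WithTop ℚ) < V.w y) : (q : WithTop ℚ) < V.w (x + y) :=
  lt_of_lt_of_le (lt_min hx hy) (V.wmin x y)

end Val

open Matrix

variable {K : Type*} [Field K] (V : Val K)

/-- the class `G_c` of matrices congruent to 1 with margins `c i - c j`. -/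
def Cls {n : ℕ} (c : Fin n → ℚ) (M : Matrix (Fin n) (Fin n) K) : Prop :=
  ∀ i j, ((c i - c j : ℚ) : WithTop ℚ) < V.w ((M - 1) i j)

lemma cls_one {n : ℕ} (c : Fin n → ℚ) : Cls V c (1 : Matrix (Fin n) (Fin n) K) := by
  intro i j
  have h : ((1 : Matrix (Fin n) (Fin n) K) - 1) i j = 0 := by simp
  rw [h, V.wzero]
  exact WithTop.coe_lt_top _

lemma cls_mul {n : ℕ} {c : Fin n → ℚ} {M N : Matrix (Fin n) (Fin n) K}
    (hM : Cls V c M) (hN : Cls V c N) : Cls V c (M * N) := by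
  have key : M * N - 1 = (M - 1) * (N - 1) + ((M - 1) + (N - 1)) := by noncomm_ring
  intro i j
  rw [key, Matrix.add_apply, Matrix.add_apply]
  refine V.lt_w_add (x := ((M - 1) * (N - 1)) i j) ?_ (V.lt_w_add (hM i j) (hN i j))
  rw [Matrix.mul_apply]
  refine V.lt_w_sum _ _ (fun k _ => ?_)
  have h : (c i - c j : ℚ) = (c i - c k) + (c k - c j) := by ring
  rw [h, V.wmul]
  exact Val.lt_add_lt (hM i k) (hN k j)

lemma cls_diag_entry {n : ℕ} {c : Fin n → ℚ} {M : Matrix (Fin n) (Fin n) K}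
    (hM : Cls V c M) (i : Fin n) : V.w (M i i) = 0 := by
  have h := hM i i
  simp only [sub_self] at h
  have h1 : M i i = (1 : Matrix (Fin n) (Fin n) K) i i + (M - 1) i i := by
    simp [Matrix.sub_apply]
  rw [h1, Matrix.one_apply_eq]
  rw [V.w_add_eq (by rw [V.wone]; exact_mod_cast h)]
  exact V.wone

/-- conjugation by a diagonal matrix shifts the class. -/
lemma cls_conj {n : ℕ} {c r : Fin n → ℚ} {M : Matrix (Fin n) (Fin n) K}
    (d : Fin n → K) (hd : ∀ i, V.w (d i) = ((r i : ℚ) : WithTop ℚ))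
    (hM : Cls V c M) :
    Cls V (fun i => c i + r i) (diagonal d * M * diagonal (fun k => (d k)⁻¹)) := by
  intro i j
  have hdi := V.wne_zero (hd i)
  have hdj := V.wne_zero (hd j)
  have hentry : (diagonal d * M * diagonal (fun k => (d k)⁻¹) - 1) i j
      = d i * ((M - 1) i j) * (d j)⁻¹ := by
    simp only [Matrix.sub_apply, Matrix.mul_diagonal, Matrix.diagonal_mul, Matrix.one_apply]
    by_cases h : i = j
    · subst h
      simp only [if_pos rfl]
      field_simp
    · simp only [if_neg h, sub_zero]
  show ((c i + r i - (c j + r j) : ℚ) : WithTop ℚ) < _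
  rw [hentry]
  have heq : (c i + r i - (c j + r j) : ℚ) = (r i + (c i - c j)) + (- r j) := by ring
  rw [heq, V.wmul, V.wmul]
  exact Val.lt_add_le (Val.le_add_lt (le_of_eq (hd i).symm) (hM i j))
    (le_of_eq (V.winv (hd j)).symm)

/-- UL decomposition within the class `G_c`: `W = T * L` with `T` upper triangular
and `L` lower triangular, both in the class. -/
lemma exists_UL : ∀ (n : ℕ) (c : Fin n → ℚ) (W : Matrix (Fin n) (Fin n) K),
    Cls V c W → ∃ T L : Matrix (Fin n) (Fin n) K, W = T * L ∧ Cls V c T ∧ Cls V c L ∧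
      (∀ i j, j < i → T i j = 0) ∧ (∀ i j, i < j → L i j = 0) := by
  intro n
  induction n with
  | zero =>
    intro c W _
    exact ⟨1, 1, by ext i j; exact i.elim0, cls_one V c, cls_one V c,
      fun i => i.elim0, fun i => i.elim0⟩
  | succ n ih =>
    intro c W hW
    set lst := Fin.last n with hlst
    have ha0 : V.w (W lst lst) = ((0 : ℚ) : WithTop ℚ) := by
      rw [cls_diag_entry V hW lst]; norm_cast
    set a := W lst lst with ha_def
    have ha : a ≠ 0 := V.wne_zero ha0
    have hainv : V.w a⁻¹ = ((0 : ℚ) : WithTop ℚ) := by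
      rw [V.winv ha0]; norm_num
    have hOff : ∀ i j : Fin (n+1), i ≠ j → (W - 1) i j = W i j := by
      intro i j h
      simp [Matrix.sub_apply, Matrix.one_apply_ne h]
    have hcs : ∀ k : Fin n, k.castSucc ≠ lst := fun k => Fin.ne_of_lt (Fin.castSucc_lt_last k)
    -- the Schur complement
    set S : Matrix (Fin n) (Fin n) K :=
      Matrix.of (fun i j => W i.castSucc j.castSucc - W i.castSucc lst * a⁻¹ * W lst j.castSucc)
      with hSdef
    have hS : Cls V (fun k => c k.castSucc) S := by
      intro i j
      have hentry : (S - 1) i j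
          = (W - 1) i.castSucc j.castSucc - W i.castSucc lst * a⁻¹ * W lst j.castSucc := by
        simp only [Matrix.sub_apply, hSdef, Matrix.of_apply, Matrix.one_apply,
          Fin.castSucc_inj]
        by_cases h : i = j
        · simp only [if_pos h]
          ring
        · simp only [if_neg h]
          ring
      show ((c i.castSucc - c j.castSucc : ℚ) : WithTop ℚ) < _
      rw [hentry]
      refine V.lt_w_sub (hW i.castSucc j.castSucc) ?_
      have h1 : ((c i.castSucc - c lst : ℚ) : WithTop ℚ) < V.w (W i.castSucc lst) := by
        rw [← hOff _ _ (hcs i)]; exact hW i.castSucc lst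
      have h2 : ((c lst - c j.castSucc : ℚ) : WithTop ℚ) < V.w (W lst j.castSucc) := by
        rw [← hOff _ _ (Ne.symm (hcs j))]; exact hW lst j.castSucc
      have h3 := Val.lt_add_lt (Val.lt_add_le h1 (le_of_eq hainv.symm)) h2
      rw [V.wmul, V.wmul]
      have heq : (c i.castSucc - c lst + 0 + (c lst - c j.castSucc) : ℚ)
          = c i.castSucc - c j.castSucc := by ring
      rw [heq] at h3
      exact h3
    obtain ⟨T', L', hWTL, hT', hL', hTu, hLl⟩ := ih (fun k => c k.castSucc) S hS
    set T : Matrix (Fin (n+1)) (Fin (n+1)) K :=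
      Matrix.of (fun i j => if hj : j = lst then (if i = lst then 1 else W i lst * a⁻¹)
        else if hi : i = lst then 0 else T' (i.castPred hi) (j.castPred hj)) with hTdef
    set L : Matrix (Fin (n+1)) (Fin (n+1)) K :=
      Matrix.of (fun i j => if hi : i = lst then W i j
        else if hj : j = lst then 0 else L' (i.castPred hi) (j.castPred hj)) with hLdef
    have hT11 : T lst lst = 1 := by
      rw [hTdef, Matrix.of_apply, dif_pos rfl, if_pos rfl]
    have hTcol : ∀ (i : Fin (n+1)), i ≠ lst → T i lst = W i lst * a⁻¹ := fun i hi => by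
      rw [hTdef, Matrix.of_apply, dif_pos rfl, if_neg hi]
    have hTrow : ∀ (j : Fin (n+1)), j ≠ lst → T lst j = 0 := fun j hj => by
      rw [hTdef, Matrix.of_apply, dif_neg hj, dif_pos rfl]
    have hTin : ∀ (i j : Fin (n+1)) (hi : i ≠ lst) (hj : j ≠ lst),
        T i j = T' (i.castPred hi) (j.castPred hj) := fun i j hi hj => by
      rw [hTdef, Matrix.of_apply, dif_neg hj, dif_neg hi]
    have hLrow : ∀ (j : Fin (n+1)), L lst j = W lst j := fun j => by
      rw [hLdef, Matrix.of_apply, dif_pos rfl]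
    have hLcol : ∀ (i : Fin (n+1)), i ≠ lst → L i lst = 0 := fun i hi => by
      rw [hLdef, Matrix.of_apply, dif_neg hi, dif_pos rfl]
    have hLin : ∀ (i j : Fin (n+1)) (hi : i ≠ lst) (hj : j ≠ lst),
        L i j = L' (i.castPred hi) (j.castPred hj) := fun i j hi hj => by
      rw [hLdef, Matrix.of_apply, dif_neg hi, dif_neg hj]
    refine ⟨T, L, ?_, ?_, ?_, ?_, ?_⟩
    · -- W = T * L
      ext i j
      rw [Matrix.mul_apply, Fin.sum_univ_castSucc]
      by_cases hi : i = lst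
      · subst hi
        rw [Finset.sum_eq_zero, hT11, hLrow, zero_add, one_mul]
        intro k _
        rw [hTrow _ (hcs k), zero_mul]
      · by_cases hj : j = lst
        · subst hj
          rw [Finset.sum_eq_zero, zero_add, hTcol i hi, hLrow, mul_assoc,
            inv_mul_cancel₀ ha, mul_one]
          intro k _
          rw [hLcol _ (hcs k), mul_zero]
        · have hterm : ∀ k : Fin n, T i k.castSucc * L k.castSucc j
              = T' (i.castPred hi) k * L' k (j.castPred hj) := by
            intro k
            rw [hTin i k.castSucc hi (hcs k), hLin k.castSucc j (hcs k) hj,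
              Fin.castPred_castSucc]
          rw [Finset.sum_congr rfl (fun k _ => hterm k), hTcol i hi, hLrow,
            ← Matrix.mul_apply, ← hWTL, hSdef, Matrix.of_apply,
            Fin.castSucc_castPred, Fin.castSucc_castPred]
          ring
    · -- Cls T
      intro i j
      by_cases hj : j = lst
      · subst hj
        by_cases hi : i = lst
        · subst hi
          have h : (T - 1) lst lst = 0 := by
            rw [Matrix.sub_apply, hT11, Matrix.one_apply_eq, sub_self]
          rw [h, V.wzero]
          exact WithTop.coe_lt_top _
        · have h : (T - 1) i lst = W i lst * a⁻¹ := by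
            rw [Matrix.sub_apply, Matrix.one_apply_ne hi, sub_zero, hTcol i hi]
          rw [h, V.wmul]
          have h1 : ((c i - c lst : ℚ) : WithTop ℚ) < V.w (W i lst) := by
            rw [← hOff _ _ hi]; exact hW i lst
          have h2 := Val.lt_add_le h1 (le_of_eq hainv.symm)
          rwa [add_zero] at h2
      · by_cases hi : i = lst
        · subst hi
          have h : (T - 1) lst j = 0 := by
            rw [Matrix.sub_apply, Matrix.one_apply_ne (Ne.symm hj), sub_zero, hTrow j hj]
          rw [h, V.wzero]
          exact WithTop.coe_lt_top _
        · have h : (T - 1) i j = (T' - 1) (i.castPred hi) (j.castPred hj) := by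
            rw [Matrix.sub_apply, Matrix.sub_apply, hTin i j hi hj]
            congr 1
            by_cases hij : i = j
            · subst hij
              rw [Matrix.one_apply_eq, Matrix.one_apply_eq]
            · rw [Matrix.one_apply_ne hij,
                Matrix.one_apply_ne (fun hc => hij (Fin.castPred_inj.mp hc))]
          rw [h]
          have h2 := hT' (i.castPred hi) (j.castPred hj)
          simpa only [Fin.castSucc_castPred] using h2
    · -- Cls L
      intro i j
      by_cases hi : i = lst
      · subst hi
        have h : (L - 1) lst j = (W - 1) lst j := by
          rw [Matrix.sub_apply, Matrix.sub_apply, hLrow]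
        rw [h]
        exact hW lst j
      · by_cases hj : j = lst
        · subst hj
          have h : (L - 1) i lst = 0 := by
            rw [Matrix.sub_apply, Matrix.one_apply_ne hi, sub_zero, hLcol i hi]
          rw [h, V.wzero]
          exact WithTop.coe_lt_top _
        · have h : (L - 1) i j = (L' - 1) (i.castPred hi) (j.castPred hj) := by
            rw [Matrix.sub_apply, Matrix.sub_apply, hLin i j hi hj]
            congr 1
            by_cases hij : i = j
            · subst hij
              rw [Matrix.one_apply_eq, Matrix.one_apply_eq]
            · rw [Matrix.one_apply_ne hij,
                Matrix.one_apply_ne (fun hc => hij (Fin.castPred_inj.mp hc))]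
          rw [h]
          have h2 := hL' (i.castPred hi) (j.castPred hj)
          simpa only [Fin.castSucc_castPred] using h2
    · -- T upper triangular
      intro i j hji
      by_cases hj : j = lst
      · subst hj
        exact absurd hji (not_lt.2 (Fin.le_last i))
      · by_cases hi : i = lst
        · subst hi
          exact hTrow j hj
        · rw [hTin i j hi hj]
          exact hTu _ _ (Fin.castPred_lt_castPred_iff.2 hji)
    · -- L lower triangular
      intro i j hij
      by_cases hi : i = lst
      · subst hi
        exact absurd hij (not_lt.2 (Fin.le_last j))
      · by_cases hj : j = lst
        · subst hj
          exact hLcol i hi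
        · rw [hLin i j hi hj]
          exact hLl _ _ (Fin.castPred_lt_castPred_iff.2 hij)

lemma cls_congr {n : ℕ} {c c' : Fin n → ℚ} {M : Matrix (Fin n) (Fin n) K}
    (h : Cls V c M) (hcc : ∀ i j, c' i - c' j = c i - c j) : Cls V c' M := by
  intro i j
  rw [show (c' i - c' j : ℚ) = c i - c j from hcc i j]
  exact h i j

lemma cls_zero_of_upper {n : ℕ} {c : Fin n → ℚ} {M : Matrix (Fin n) (Fin n) K}
    (hM : Cls V c M) (htri : ∀ i j, j < i → M i j = 0)
    (hc : ∀ i j : Fin n, i ≤ j → c j ≤ c i) : Cls V (fun _ => (0:ℚ)) M := by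
  intro i j
  rcases le_or_gt i j with hle | hlt
  · refine lt_of_le_of_lt ?_ (hM i j)
    rw [WithTop.coe_le_coe]
    have := hc i j hle
    linarith
  · have h0 : (M - 1) i j = 0 := by
      rw [Matrix.sub_apply, htri i j hlt, Matrix.one_apply_ne (Fin.ne_of_gt hlt), sub_zero]
    rw [h0, V.wzero]
    exact WithTop.coe_lt_top _

lemma cls_zero_of_lower {n : ℕ} {c : Fin n → ℚ} {M : Matrix (Fin n) (Fin n) K}
    (hM : Cls V c M) (htri : ∀ i j, i < j → M i j = 0)
    (hc : ∀ i j : Fin n, i ≤ j → c i ≤ c j) : Cls V (fun _ => (0:ℚ)) M := by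
  intro i j
  rcases le_or_gt j i with hle | hlt
  · refine lt_of_le_of_lt ?_ (hM i j)
    rw [WithTop.coe_le_coe]
    have := hc j i hle
    linarith
  · have h0 : (M - 1) i j = 0 := by
      rw [Matrix.sub_apply, htri i j hlt, Matrix.one_apply_ne (Fin.ne_of_lt hlt), sub_zero]
    rw [h0, V.wzero]
    exact WithTop.coe_lt_top _

lemma w_prod_zero {ι : Type*} (s : Finset ι) (f : ι → K)
    (h : ∀ i ∈ s, V.w (f i) = 0) : V.w (∏ i ∈ s, f i) = 0 := by
  induction s using Finset.induction with
  | empty => simpa using V.wone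
  | @insert a s' hni ih =>
    rw [Finset.prod_insert hni, V.wmul, h a (Finset.mem_insert_self a s'),
      ih fun k hk => h k (Finset.mem_insert_of_mem hk), add_zero]

lemma det_w_zero_upper {n : ℕ} {c : Fin n → ℚ} {M : Matrix (Fin n) (Fin n) K}
    (hM : Cls V c M) (htri : ∀ i j : Fin n, j < i → M i j = 0) : V.w M.det = 0 := by
  rw [Matrix.det_of_upperTriangular (fun i j (h : (id j : Fin n) < id i) => htri i j h)]
  exact w_prod_zero V _ _ (fun i _ => cls_diag_entry V hM i)

lemma det_w_zero_lower {n : ℕ} {c : Fin n → ℚ} {M : Matrix (Fin n) (Fin n) K}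
    (hM : Cls V c M) (htri : ∀ i j : Fin n, i < j → M i j = 0) : V.w M.det = 0 := by
  rw [Matrix.det_of_lowerTriangular M (fun i j (h : (id i : Fin n) < id j) => htri i j h)]
  exact w_prod_zero V _ _ (fun i _ => cls_diag_entry V hM i)

/-- The core factorization: `U' * D * V' = X * D * Y` with `X, Y` congruent to `1`
entrywise with positive valuation, and triangular. -/
lemma core {n : ℕ} (γ δ' : Fin n → ℚ) (d : Fin n → K)
    (hd : ∀ i, V.w (d i) = ((γ i - δ' i : ℚ) : WithTop ℚ))
    (hγ : ∀ i j : Fin n, i ≤ j → γ j ≤ γ i)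
    (hδ : ∀ i j : Fin n, i ≤ j → δ' i ≤ δ' j)
    (U' V' : Matrix (Fin n) (Fin n) K)
    (hU : Cls V γ U') (hV : Cls V δ' V') :
    ∃ X Y : Matrix (Fin n) (Fin n) K,
      U' * diagonal d * V' = X * diagonal d * Y ∧
      Cls V (fun _ => (0:ℚ)) X ∧ Cls V (fun _ => (0:ℚ)) Y ∧
      V.w X.det = 0 ∧ V.w Y.det = 0 := by
  have hdne : ∀ i, d i ≠ 0 := fun i => V.wne_zero (hd i)
  have hdinv : (fun k => ((d k)⁻¹)⁻¹) = d := funext fun k => inv_inv (d k)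
  have hDD : diagonal d * diagonal (fun k => (d k)⁻¹) = 1 := by
    rw [diagonal_mul_diagonal]
    convert Matrix.diagonal_one with i <;> try rfl
    exact mul_inv_cancel₀ (hdne _)
  have hDD' : diagonal (fun k => (d k)⁻¹) * diagonal d = 1 := by
    rw [diagonal_mul_diagonal]
    convert Matrix.diagonal_one with i <;> try rfl
    exact inv_mul_cancel₀ (hdne _)
  obtain ⟨T₁, L₁, hU'eq, hT₁, hL₁, hT₁u, hL₁l⟩ := exists_UL V n γ U' hU
  -- push L₁ through the diagonal
  set L₁'' : Matrix (Fin n) (Fin n) K :=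
    diagonal (fun k => (d k)⁻¹) * L₁ * diagonal d with hL₁''def
  have hclsL₁'' : Cls V δ' L₁'' := by
    have h := cls_conj V (fun k => (d k)⁻¹) (r := fun i => -(γ i - δ' i))
      (fun i => V.winv (hd i)) hL₁
    rw [hdinv] at h
    exact cls_congr V h (fun i j => by ring)
  have hpush1 : L₁ * diagonal d = diagonal d * L₁'' := by
    rw [hL₁''def, ← mul_assoc, ← mul_assoc, hDD, one_mul]
  set W : Matrix (Fin n) (Fin n) K := L₁'' * V' with hWdef
  have hclsW : Cls V δ' W := cls_mul V hclsL₁'' hV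
  obtain ⟨T₂, L₂, hWeq, hT₂, hL₂, hT₂u, hL₂l⟩ := exists_UL V n δ' W hclsW
  set T₂'' : Matrix (Fin n) (Fin n) K :=
    diagonal d * T₂ * diagonal (fun k => (d k)⁻¹) with hT₂''def
  have hclsT₂'' : Cls V γ T₂'' := by
    have h := cls_conj V d (r := fun i => γ i - δ' i) hd hT₂
    exact cls_congr V h (fun i j => by ring)
  have hT₂''u : ∀ i j, j < i → T₂'' i j = 0 := by
    intro i j hji
    rw [hT₂''def]
    simp only [Matrix.mul_diagonal, Matrix.diagonal_mul]
    rw [hT₂u i j hji, mul_zero, zero_mul]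
  have hpush2 : T₂'' * diagonal d = diagonal d * T₂ := by
    rw [hT₂''def, mul_assoc, mul_assoc, hDD', mul_one]
  set X : Matrix (Fin n) (Fin n) K := T₁ * T₂'' with hXdef
  have hclsX : Cls V γ X := cls_mul V hT₁ hclsT₂''
  have hXu : ∀ i j, j < i → X i j = 0 := by
    intro i j hji
    rw [hXdef, Matrix.mul_apply]
    refine Finset.sum_eq_zero (fun k _ => ?_)
    rcases le_or_gt k j with hkj | hjk
    · rw [hT₁u i k (lt_of_le_of_lt hkj hji), zero_mul]
    · rw [hT₂''u k j hjk, mul_zero]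
  refine ⟨X, L₂, ?_, cls_zero_of_upper V hclsX hXu hγ, cls_zero_of_lower V hL₂ hL₂l hδ,
    det_w_zero_upper V hclsX hXu, det_w_zero_lower V hL₂ hL₂l⟩
  calc U' * diagonal d * V' = T₁ * (L₁ * diagonal d) * V' := by
        rw [hU'eq]; noncomm_ring
  _ = T₁ * (diagonal d * L₁'') * V' := by rw [hpush1]
  _ = T₁ * diagonal d * W := by rw [hWdef]; noncomm_ring
  _ = T₁ * diagonal d * (T₂ * L₂) := by rw [hWeq]
  _ = T₁ * (diagonal d * T₂) * L₂ := by noncomm_ring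
  _ = T₁ * (T₂'' * diagonal d) * L₂ := by rw [hpush2]
  _ = X * diagonal d * L₂ := by rw [hXdef]; noncomm_ring

section MapQ

def mq (a : WithTop ℤ) : WithTop ℚ := a.map (fun n : ℤ => (n : ℚ))

@[simp] lemma mq_top : mq ⊤ = ⊤ := rfl

@[simp] lemma mq_coe (n : ℤ) : mq (n : ℤ) = ((n : ℚ) : WithTop ℚ) := rfl

lemma mq_add (a b : WithTop ℤ) : mq (a + b) = mq a + mq b := by
  induction a using WithTop.recTopCoe with
  | top => simp [top_add]
  | coe a =>
    induction b using WithTop.recTopCoe with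
    | top => simp [add_top]
    | coe b =>
      rw [← WithTop.coe_add, mq_coe, mq_coe, mq_coe, ← WithTop.coe_add]
      push_cast
      rfl

lemma mq_le_iff {a b : WithTop ℤ} : mq a ≤ mq b ↔ a ≤ b := by
  induction a using WithTop.recTopCoe with
  | top =>
    induction b using WithTop.recTopCoe with
    | top => simp
    | coe b => simp [mq]
  | coe a =>
    induction b using WithTop.recTopCoe with
    | top => simp
    | coe b =>
      rw [mq_coe, mq_coe, WithTop.coe_le_coe, WithTop.coe_le_coe]
      exact Int.cast_le

lemma mq_min (a b : WithTop ℤ) : mq (min a b) = min (mq a) (mq b) := by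
  rcases le_total a b with h | h
  · rw [min_eq_left h, min_eq_left (mq_le_iff.2 h)]
  · rw [min_eq_right h, min_eq_right (mq_le_iff.2 h)]

lemma mq_eq_top_iff {a : WithTop ℤ} : mq a = ⊤ ↔ a = ⊤ := by
  induction a using WithTop.recTopCoe with
  | top => simp
  | coe a => simp [mq]

@[simp] lemma mq_zero : mq 0 = 0 := by
  rw [show (0 : WithTop ℤ) = ((0:ℤ) : WithTop ℤ) from rfl, mq_coe]
  norm_num

lemma mq_nonneg_iff {a : WithTop ℤ} : 0 ≤ mq a ↔ 0 ≤ a := by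
  rw [← mq_zero, mq_le_iff]

end MapQ

lemma entry_nonneg {n : ℕ} {M : Matrix (Fin n) (Fin n) K}
    (hM : Cls V (fun _ => (0:ℚ)) M) (i j : Fin n) : 0 ≤ V.w (M i j) := by
  have hx : M i j = (M - 1) i j + (1 : Matrix (Fin n) (Fin n) K) i j := by
    rw [Matrix.sub_apply]; ring
  rw [hx]
  refine le_trans (le_min ?_ ?_) (V.wmin _ _)
  · have h := hM i j
    rw [sub_self] at h
    exact le_of_lt (lt_of_le_of_lt (by norm_num) h)
  · rw [Matrix.one_apply]
    split
    · rw [V.wone]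
    · rw [V.wzero]; exact le_top

lemma exists_unit_lift {n : ℕ} (R : Subring K) (hmem : ∀ x : K, 0 ≤ V.w x → x ∈ R)
    {M : Matrix (Fin n) (Fin n) K} (hM : Cls V (fun _ => (0:ℚ)) M)
    (hdet : V.w M.det = 0) :
    ∃ N : Matrix (Fin n) (Fin n) R, N.map (fun x => (x : K)) = M ∧ IsUnit N := by
  have hent : ∀ i j, M i j ∈ R := fun i j => hmem _ (entry_nonneg V hM i j)
  have hdet' : V.w M.det = ((0 : ℚ) : WithTop ℚ) := by rw [hdet]; exact WithTop.coe_zero.symm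
  have hMdet0 : M.det ≠ 0 := V.wne_zero hdet'
  refine ⟨Matrix.of (fun i j => (⟨M i j, hent i j⟩ : R)), by ext i j; rfl, ?_⟩
  rw [Matrix.isUnit_iff_isUnit_det]
  have hdetN : ((Matrix.of (fun i j => (⟨M i j, hent i j⟩ : R))).det : K) = M.det := by
    rw [show ((Matrix.of (fun i j => (⟨M i j, hent i j⟩ : R))).det : K)
        = R.subtype (Matrix.of (fun i j => (⟨M i j, hent i j⟩ : R))).det from rfl,
      RingHom.map_det]
    congr 1
  have hinvmem : M.det⁻¹ ∈ R := by
    refine hmem _ ?_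
    rw [V.winv hdet']
    norm_num
  refine ⟨⟨_, ⟨M.det⁻¹, hinvmem⟩, ?_, ?_⟩, rfl⟩
  · refine Subtype.ext ?_
    show ((Matrix.of (fun i j => (⟨M i j, hent i j⟩ : R))).det : K) * M.det⁻¹ = 1
    rw [hdetN]
    exact mul_inv_cancel₀ hMdet0
  · refine Subtype.ext ?_
    show M.det⁻¹ * ((Matrix.of (fun i j => (⟨M i j, hent i j⟩ : R))).det : K) = 1
    rw [hdetN]
    exact inv_mul_cancel₀ hMdet0

lemma diag_submatrix {ι κ : Type*} [DecidableEq ι] [DecidableEq κ] (g : ι → K) (e : κ ≃ ι) :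
    (diagonal g).submatrix e e = diagonal (fun k => g (e k)) := by
  ext i j
  rw [Matrix.submatrix_apply]
  by_cases h : i = j
  · subst h; rw [Matrix.diagonal_apply_eq, Matrix.diagonal_apply_eq]
  · rw [Matrix.diagonal_apply_ne _ h, Matrix.diagonal_apply_ne _ (fun hc => h (e.injective hc))]

end DVRAux

open Matrix

/-- **Lemma 5.3.** Let `R` be a discrete valuation ring with field of fractions `K` and
(normalized, additive) valuation `v : K → ℤ ∪ {∞}`. Let `s, t, u, P, Q` be invertible
`I × I`-matrices over `K` with `s, t, u` diagonal, and set `ρ_i = v(s_i) + v(t_i) + v(u_i)`.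
Suppose there are tuples of rationals `(α_i)`, `(β_i)` such that for all `i, j`:
(i) `v(t_i) = α_i - β_i`; (ii) `v(P_{ij} - δ_{ij}) > α_i - α_j`;
(iii) `v(Q_{ij} - δ_{ij}) > β_i - β_j`; (iv) `ρ_i ≥ ρ_j → α_i - α_j ≥ v(s_j) - v(s_i)`;
(v) `ρ_i ≥ ρ_j → β_j - β_i ≥ v(u_j) - v(u_i)`.
Then `s P t Q u` is equivalent over `R` to the diagonal matrix `s t u`. -/
theorem dvr_equiv {K : Type*} [Field K] (v : K → WithTop ℤ)
    (hv0 : ∀ x : K, v x = ⊤ ↔ x = 0)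
    (hvmul : ∀ x y : K, v (x * y) = v x + v y)
    (hvadd : ∀ x y : K, min (v x) (v y) ≤ v (x + y))
    (hvsurj : ∀ n : ℤ, ∃ x : K, v x = (n : WithTop ℤ))
    (R : Subring K) (hR : ∀ x : K, x ∈ R ↔ 0 ≤ v x)
    {I : Type*} [Fintype I] [DecidableEq I]
    (s t u : I → K) (hs : ∀ i, s i ≠ 0) (ht : ∀ i, t i ≠ 0) (hu : ∀ i, u i ≠ 0)
    (P Q : Matrix I I K) (hP : IsUnit P) (hQ : IsUnit Q)
    (α β : I → ℚ)
    (h1 : ∀ i, (v (t i)).map (fun n : ℤ => (n : ℚ)) = ((α i - β i : ℚ) : WithTop ℚ))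
    (h2 : ∀ i j, ((α i - α j : ℚ) : WithTop ℚ)
        < (v (P i j - if i = j then 1 else 0)).map (fun n : ℤ => (n : ℚ)))
    (h3 : ∀ i j, ((β i - β j : ℚ) : WithTop ℚ)
        < (v (Q i j - if i = j then 1 else 0)).map (fun n : ℤ => (n : ℚ)))
    (h4 : ∀ i j, v (s j) + v (t j) + v (u j) ≤ v (s i) + v (t i) + v (u i) →
        (v (s j)).map (fun n : ℤ => (n : ℚ))
          ≤ ((α i - α j : ℚ) : WithTop ℚ) + (v (s i)).map (fun n : ℤ => (n : ℚ)))
    (h5 : ∀ i j, v (s j) + v (t j) + v (u j) ≤ v (s i) + v (t i) + v (u i) →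
        (v (u j)).map (fun n : ℤ => (n : ℚ))
          ≤ ((β j - β i : ℚ) : WithTop ℚ) + (v (u i)).map (fun n : ℤ => (n : ℚ))) :
    ∃ U V : Matrix I I R, IsUnit U ∧ IsUnit V ∧
      U.map (fun x => (x : K)) *
          (Matrix.diagonal s * P * Matrix.diagonal t * Q * Matrix.diagonal u) *
        V.map (fun x => (x : K))
      = Matrix.diagonal (fun i => s i * t i * u i) := by
  classical
  set W : DVRAux.Val K :=
    { w := fun x => DVRAux.mq (v x)
      wmul := fun x y => by
        show DVRAux.mq (v (x * y)) = DVRAux.mq (v x) + DVRAux.mq (v y)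
        rw [hvmul, DVRAux.mq_add]
      wmin := fun x y => by
        show min (DVRAux.mq (v x)) (DVRAux.mq (v y)) ≤ DVRAux.mq (v (x + y))
        rw [← DVRAux.mq_min]
        exact DVRAux.mq_le_iff.2 (hvadd x y)
      wtop := fun x => by
        show DVRAux.mq (v x) = ⊤ ↔ x = 0
        rw [DVRAux.mq_eq_top_iff]; exact hv0 x } with hWdef
  have hmem : ∀ x : K, 0 ≤ W.w x → x ∈ R := fun x hx => (hR x).2 (DVRAux.mq_nonneg_iff.1 hx)
  -- rational values of the diagonal entries
  have hvq : ∀ x : K, x ≠ 0 → ∃ q : ℚ, W.w x = (q : WithTop ℚ) := by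
    intro x hx
    have hne : v x ≠ ⊤ := fun h => hx ((hv0 x).1 h)
    obtain ⟨m, hm⟩ := WithTop.ne_top_iff_exists.1 hne
    refine ⟨(m : ℚ), ?_⟩
    show DVRAux.mq (v x) = _
    rw [← hm]
    rfl
  choose qs hqs using fun i => hvq (s i) (hs i)
  choose qt hqt using fun i => hvq (t i) (ht i)
  choose qu hqu using fun i => hvq (u i) (hu i)
  have hqt' : ∀ i, qt i = α i - β i := by
    intro i
    have := (hqt i).symm.trans (h1 i)
    exact_mod_cast this
  set ρq : I → ℚ := fun i => qs i + qt i + qu i with hρq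
  have hord : ∀ i j : I, ρq j ≤ ρq i →
      v (s j) + v (t j) + v (u j) ≤ v (s i) + v (t i) + v (u i) := by
    intro i j h
    rw [← DVRAux.mq_le_iff, DVRAux.mq_add, DVRAux.mq_add, DVRAux.mq_add, DVRAux.mq_add]
    have e1 : DVRAux.mq (v (s i)) = ((qs i : ℚ) : WithTop ℚ) := hqs i
    have e2 : DVRAux.mq (v (t i)) = ((qt i : ℚ) : WithTop ℚ) := hqt i
    have e3 : DVRAux.mq (v (u i)) = ((qu i : ℚ) : WithTop ℚ) := hqu i
    have e4 : DVRAux.mq (v (s j)) = ((qs j : ℚ) : WithTop ℚ) := hqs j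
    have e5 : DVRAux.mq (v (t j)) = ((qt j : ℚ) : WithTop ℚ) := hqt j
    have e6 : DVRAux.mq (v (u j)) = ((qu j : ℚ) : WithTop ℚ) := hqu j
    rw [e1, e2, e3, e4, e5, e6, ← WithTop.coe_add, ← WithTop.coe_add, ← WithTop.coe_add,
      ← WithTop.coe_add, WithTop.coe_le_coe]
    exact h
  -- sorting
  set n := Fintype.card I with hn
  set e₀ : I ≃ Fin n := Fintype.equivFin I with he₀
  set f : Fin n → ℚ := fun k => - ρq (e₀.symm k) with hf
  set e : Fin n ≃ I := (Tuple.sort f).trans e₀.symm with he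
  have hmono : ∀ i j : Fin n, i ≤ j → ρq (e j) ≤ ρq (e i) := by
    intro i j hij
    have h := Tuple.monotone_sort f hij
    simp only [Function.comp_apply, hf] at h
    have : - ρq (e₀.symm (Tuple.sort f i)) ≤ - ρq (e₀.symm (Tuple.sort f j)) := h
    have he' : ∀ k, e k = e₀.symm (Tuple.sort f k) := fun k => rfl
    rw [he' i, he' j]
    linarith
  -- data on Fin n
  set γ : Fin n → ℚ := fun k => α (e k) + qs (e k) with hγdef
  set δ' : Fin n → ℚ := fun k => β (e k) - qu (e k) with hδdef
  set d : Fin n → K := fun k => s (e k) * t (e k) * u (e k) with hd_def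
  have hd : ∀ k, W.w (d k) = ((γ k - δ' k : ℚ) : WithTop ℚ) := by
    intro k
    show DVRAux.mq (v (s (e k) * t (e k) * u (e k))) = _
    rw [show v (s (e k) * t (e k) * u (e k))
        = v (s (e k)) + v (t (e k)) + v (u (e k)) by rw [hvmul, hvmul],
      DVRAux.mq_add, DVRAux.mq_add]
    have e1 : DVRAux.mq (v (s (e k))) = ((qs (e k) : ℚ) : WithTop ℚ) := hqs _
    have e2 : DVRAux.mq (v (t (e k))) = ((qt (e k) : ℚ) : WithTop ℚ) := hqt _
    have e3 : DVRAux.mq (v (u (e k))) = ((qu (e k) : ℚ) : WithTop ℚ) := hqu _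
    rw [e1, e2, e3, ← WithTop.coe_add, ← WithTop.coe_add, WithTop.coe_inj]
    rw [hqt' (e k)]
    show qs (e k) + (α (e k) - β (e k)) + qu (e k) = (α (e k) + qs (e k)) - (β (e k) - qu (e k))
    ring
  have hγmono : ∀ i j : Fin n, i ≤ j → γ j ≤ γ i := by
    intro i j hij
    have h4' := h4 (e i) (e j) (hord (e i) (e j) (hmono i j hij))
    have e1 : (v (s (e i))).map (fun n : ℤ => (n : ℚ)) = ((qs (e i) : ℚ) : WithTop ℚ) := hqs _
    have e2 : (v (s (e j))).map (fun n : ℤ => (n : ℚ)) = ((qs (e j) : ℚ) : WithTop ℚ) := hqs _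
    rw [e1, e2, ← WithTop.coe_add, WithTop.coe_le_coe] at h4'
    show α (e j) + qs (e j) ≤ α (e i) + qs (e i)
    linarith
  have hδmono : ∀ i j : Fin n, i ≤ j → δ' i ≤ δ' j := by
    intro i j hij
    have h5' := h5 (e i) (e j) (hord (e i) (e j) (hmono i j hij))
    have e1 : (v (u (e i))).map (fun n : ℤ => (n : ℚ)) = ((qu (e i) : ℚ) : WithTop ℚ) := hqu _
    have e2 : (v (u (e j))).map (fun n : ℤ => (n : ℚ)) = ((qu (e j) : ℚ) : WithTop ℚ) := hqu _
    rw [e1, e2, ← WithTop.coe_add, WithTop.coe_le_coe] at h5'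
    show β (e i) - qu (e i) ≤ β (e j) - qu (e j)
    linarith
  -- the transported matrices and their classes
  set P' : Matrix (Fin n) (Fin n) K := P.submatrix e e with hP'def
  set Q' : Matrix (Fin n) (Fin n) K := Q.submatrix e e with hQ'def
  have hPcls : DVRAux.Cls W (fun k => α (e k)) P' := by
    intro i j
    have hent : (P' - 1) i j = P (e i) (e j) - (if e i = e j then 1 else 0) := by
      rw [Matrix.sub_apply, hP'def, Matrix.submatrix_apply, Matrix.one_apply]
      congr 1
      by_cases h : i = j
      · rw [if_pos h, if_pos (by rw [h])]
      · rw [if_neg h, if_neg (fun hc => h (e.injective hc))]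
    rw [hent]
    exact h2 (e i) (e j)
  have hQcls : DVRAux.Cls W (fun k => β (e k)) Q' := by
    intro i j
    have hent : (Q' - 1) i j = Q (e i) (e j) - (if e i = e j then 1 else 0) := by
      rw [Matrix.sub_apply, hQ'def, Matrix.submatrix_apply, Matrix.one_apply]
      congr 1
      by_cases h : i = j
      · rw [if_pos h, if_pos (by rw [h])]
      · rw [if_neg h, if_neg (fun hc => h (e.injective hc))]
    rw [hent]
    exact h3 (e i) (e j)
  set s' : Fin n → K := fun k => s (e k) with hs'def
  set t' : Fin n → K := fun k => t (e k) with ht'def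
  set u' : Fin n → K := fun k => u (e k) with hu'def
  set U' : Matrix (Fin n) (Fin n) K :=
    diagonal s' * P' * diagonal (fun k => (s' k)⁻¹) with hU'def
  set V' : Matrix (Fin n) (Fin n) K :=
    diagonal (fun k => (u' k)⁻¹) * Q' * diagonal u' with hV'def
  have hUcls : DVRAux.Cls W γ U' := by
    have h := DVRAux.cls_conj W s' (r := fun k => qs (e k)) (fun k => hqs (e k)) hPcls
    exact DVRAux.cls_congr W h (fun i j => by simp only [hγdef]; try ring)
  have hVcls : DVRAux.Cls W δ' V' := by
    have h := DVRAux.cls_conj W (fun k => (u' k)⁻¹) (r := fun k => -(qu (e k)))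
      (fun k => by
        rw [W.winv (hqu (e k))]) hQcls
    rw [show (fun k => ((u' k)⁻¹)⁻¹) = u' from funext fun k => inv_inv _] at h
    exact DVRAux.cls_congr W h (fun i j => by simp only [hδdef]; try ring)
  -- the middle diagonal identity
  have hmid : diagonal (fun k => (s' k)⁻¹) * diagonal d * diagonal (fun k => (u' k)⁻¹)
      = diagonal t' := by
    rw [diagonal_mul_diagonal, diagonal_mul_diagonal]
    refine congrArg Matrix.diagonal (funext fun k => ?_)
    show (s (e k))⁻¹ * (s (e k) * t (e k) * u (e k)) * (u (e k))⁻¹ = t (e k)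
    field_simp
    try rw [div_eq_iff (mul_ne_zero (hs (e k)) (hu (e k)))]
    try ring
  have hA : U' * diagonal d * V'
      = diagonal s' * P' * diagonal t' * Q' * diagonal u' := by
    rw [← hmid, hU'def, hV'def]
    noncomm_ring
  obtain ⟨X, Y, hXY, hXcls, hYcls, hXdet, hYdet⟩ :=
    DVRAux.core W γ δ' d hd hγmono hδmono U' V' hUcls hVcls
  obtain ⟨NX, hNXmap, hNXunit⟩ := DVRAux.exists_unit_lift W R hmem hXcls hXdet
  obtain ⟨NY, hNYmap, hNYunit⟩ := DVRAux.exists_unit_lift W R hmem hYcls hYdet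
  -- invert over R
  set UX : Matrix (Fin n) (Fin n) R := ↑(hNXunit.unit⁻¹) with hUXdef
  set UY : Matrix (Fin n) (Fin n) R := ↑(hNYunit.unit⁻¹) with hUYdef
  have hUXX : UX * NX = 1 := IsUnit.val_inv_mul hNXunit
  have hYUY : NY * UY = 1 := IsUnit.mul_val_inv hNYunit
  have hmapUX : UX.map (fun x => (x : K)) * X = 1 := by
    rw [← hNXmap, show (fun x : R => (x : K)) = ⇑R.subtype from rfl, ← Matrix.map_mul, hUXX]
    exact Matrix.map_one _ rfl rfl
  have hmapUY : Y * UY.map (fun x => (x : K)) = 1 := by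
    rw [← hNYmap, show (fun x : R => (x : K)) = ⇑R.subtype from rfl, ← Matrix.map_mul, hYUY]
    exact Matrix.map_one _ rfl rfl
  -- the Fin n equation
  have hfin : UX.map (fun x => (x : K))
      * (diagonal s' * P' * diagonal t' * Q' * diagonal u')
      * UY.map (fun x => (x : K)) = diagonal d := by
    rw [← hA, hXY]
    calc UX.map (fun x => (x : K)) * (X * diagonal d * Y) * UY.map (fun x => (x : K))
        = (UX.map (fun x => (x : K)) * X) * diagonal d * (Y * UY.map (fun x => (x : K))) := by
          noncomm_ring
    _ = diagonal d := by rw [hmapUX, hmapUY, one_mul, mul_one]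
  -- transport back to I
  refine ⟨UX.submatrix e.symm e.symm, UY.submatrix e.symm e.symm, ?_, ?_, ?_⟩
  · rw [Matrix.isUnit_iff_isUnit_det, Matrix.det_submatrix_equiv_self,
      ← Matrix.isUnit_iff_isUnit_det]
    exact Units.isUnit _
  · rw [Matrix.isUnit_iff_isUnit_det, Matrix.det_submatrix_equiv_self,
      ← Matrix.isUnit_iff_isUnit_det]
    exact Units.isUnit _
  · have hsub : diagonal s * P * diagonal t * Q * diagonal u
        = (diagonal s' * P' * diagonal t' * Q' * diagonal u').submatrix e.symm e.symm := by
      rw [hP'def, hQ'def, ← DVRAux.diag_submatrix s e, ← DVRAux.diag_submatrix t e,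
        ← DVRAux.diag_submatrix u e, Matrix.submatrix_mul_equiv, Matrix.submatrix_mul_equiv,
        Matrix.submatrix_mul_equiv, Matrix.submatrix_mul_equiv]
      rw [Matrix.submatrix_submatrix]
      simp only [Equiv.self_comp_symm]
      exact (Matrix.submatrix_id_id _).symm
    rw [hsub, ← Matrix.submatrix_map _ _ _ UX, ← Matrix.submatrix_map _ _ _ UY,
      Matrix.submatrix_mul_equiv, Matrix.submatrix_mul_equiv, hfin]
    rw [DVRAux.diag_submatrix d e.symm]
    refine congrArg Matrix.diagonal (funext fun i => ?_)
    show s (e (e.symm i)) * t (e (e.symm i)) * u (e (e.symm i)) = s i * t i * u i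
    rw [Equiv.apply_symm_apply]


end
end
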